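/- There is a constant κ₁ > 10 such that for every κ ≥ κ₁ there exists k₀ = k₀(κ) > 0 with the following property. In the setting of the Whitney decomposition 𝒲 and the cluster balls {B_C}_{C∈𝒞} with ε ≤ k₀/N, the cluster assignment Q ↦ C_Q (the cluster of maximal depth with Q ⊂ B_{C_Q}) is well defined and satisfies: (i) Δ/20 ≤ δ_Q ≤ 2K₁κ·W_{C_Q} for every Q ∈ 𝒲; (ii) if Q ∈ 𝒲_II then C_Q = {x_Q}, where x_Q is the unique point of 1.1Q ∩ E₂; (iii) if Q ∈ ∂𝒲 then C_Q = E₂. -/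

import Mathlib

open MeasureTheory Set Metric
open scoped Classical

noncomputable section

abbrev Pt : Type := EuclideanSpace ℝ (Fin 2)

/-- The point `(a, b)` of the Euclidean plane. -/
def pt (a b : ℝ) : Pt := WithLp.toLp 2 ![a, b]

/-- `V` is an `N`-ary tree: a finite prefix-closed set of strings over the alphabet
`{0, …, N−1}` containing the empty string (the root), in which every non-leaf node
has at least `2` (and, automatically, at most `N`) children. -/
def IsNaryTree (N : ℕ) (V : Finset (List ℕ)) : Prop :=
  [] ∈ V ∧
  (∀ v ∈ V, ∀ u : List ℕ, u <+: v → u ∈ V) ∧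
  (∀ v ∈ V, ∀ i ∈ v, i < N) ∧
  (∀ v ∈ V, (∃ a : ℕ, v ++ [a] ∈ V) →
    2 ≤ ((Finset.range N).filter (fun a => v ++ [a] ∈ V)).card)

/-- `v` is a leaf of `V`. -/
def IsLeaf (V : Finset (List ℕ)) (v : List ℕ) : Prop :=
  v ∈ V ∧ ∀ a : ℕ, v ++ [a] ∉ V

/-- The tree has depth at least one, i.e. the root is not a leaf. -/
def DepthAtLeastOne (V : Finset (List ℕ)) : Prop := ∃ a : ℕ, [a] ∈ V

/-- Radially decaying weights with parameter `ε` (with the convention `W ∅ = 1`). -/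
def RadiallyDecaying (V : Finset (List ℕ)) (W : List ℕ → ℝ) (ε : ℝ) : Prop :=
  W [] = 1 ∧ (∀ v ∈ V, 0 < W v) ∧ ∀ v ∈ V, v ≠ [] → W v ≤ ε * W v.dropLast

/-- The map `Ψ(v) = ∑_{i=1}^{d(v)} W(π_{i−1}(v))·v_i/(N−1)`. -/
def Psi (N : ℕ) (W : List ℕ → ℝ) (v : List ℕ) : ℝ :=
  ∑ i ∈ Finset.range v.length, W (v.take i) * (v.getD i 0 : ℝ) / ((N : ℝ) - 1)

/-- `Δ = min_{v ∈ ∂V} W_v`. -/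
def Delta (V : Finset (List ℕ)) (W : List ℕ → ℝ) : ℝ :=
  sInf {w : ℝ | ∃ v, IsLeaf V v ∧ w = W v}

def E1set (Δ : ℝ) : Set Pt :=
  {x | (∃ n : ℤ, x 0 = (n : ℝ) * Δ) ∧ x 0 ∈ Ico (0 : ℝ) 2 ∧ x 1 = 0}

def E2set (N : ℕ) (V : Finset (List ℕ)) (W : List ℕ → ℝ) : Set Pt :=
  {x | ∃ v, IsLeaf V v ∧ x = pt (Psi N W v) (W v)}

def Eset (N : ℕ) (V : Finset (List ℕ)) (W : List ℕ → ℝ) : Set Pt :=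
  E1set (Delta V W) ∪ E2set N V W

/-- Bundle of standing hypotheses: `N ≥ 2`, `V` an `N`-ary tree, `0 < ε ≤ k₀/N`,
and radially decaying weights with parameter `ε`. -/
def TreeHyp (k₀ : ℝ) (N : ℕ) (V : Finset (List ℕ)) (W : List ℕ → ℝ) (ε : ℝ) : Prop :=
  2 ≤ N ∧ IsNaryTree N V ∧ 0 < ε ∧ ε ≤ k₀ / N ∧ RadiallyDecaying V W ε

/-- Distance between two subsets of the plane. -/
def setDist (s t : Set Pt) : ℝ := sInf {d : ℝ | ∃ x ∈ s, ∃ y ∈ t, d = dist x y}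

/-- A dyadic square arising from `Q⁰ = [−3,5)²` by `k` repeated bisections. -/
structure DSquare where
  k : ℕ
  i : ℕ
  j : ℕ
  hi : i < 2 ^ k
  hj : j < 2 ^ k

namespace DSquare

def side (Q : DSquare) : ℝ := 8 / 2 ^ Q.k

def x0 (Q : DSquare) : ℝ := -3 + Q.i * Q.side

def y0 (Q : DSquare) : ℝ := -3 + Q.j * Q.side

/-- The (half-open) square itself, as a subset of the plane. -/
def set (Q : DSquare) : Set Pt :=
  {x | x 0 ∈ Ico Q.x0 (Q.x0 + Q.side) ∧ x 1 ∈ Ico Q.y0 (Q.y0 + Q.side)}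

/-- The concentric dilate `λQ`. -/
def dil (Q : DSquare) (lam : ℝ) : Set Pt :=
  {x | |x 0 - (Q.x0 + Q.side / 2)| ≤ lam * Q.side / 2 ∧
       |x 1 - (Q.y0 + Q.side / 2)| ≤ lam * Q.side / 2}

/-- The dyadic ancestor of `Q` at generation `k' ≤ Q.k`. -/
def anc (Q : DSquare) (k' : ℕ) (h : k' ≤ Q.k) : DSquare :=
  ⟨k', Q.i / 2 ^ (Q.k - k'), Q.j / 2 ^ (Q.k - k'), by
      have h2 : 0 < 2 ^ (Q.k - k') := pow_pos (by norm_num) _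
      rw [Nat.div_lt_iff_lt_mul h2, ← pow_add, Nat.add_sub_cancel' h]
      exact Q.hi, by
      have h2 : 0 < 2 ^ (Q.k - k') := pow_pos (by norm_num) _
      rw [Nat.div_lt_iff_lt_mul h2, ← pow_add, Nat.add_sub_cancel' h]
      exact Q.hj⟩

end DSquare

def Q0set : Set Pt := {x | x 0 ∈ Ico (-3 : ℝ) 5 ∧ x 1 ∈ Ico (-3 : ℝ) 5}

/-- `Q` belongs to the Whitney decomposition `𝒲` of `Q⁰` relative to `E`:
`3Q ∩ E` has at most one point, while `3Q'' ∩ E` has at least two points for every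
proper dyadic ancestor `Q''` of `Q`. -/
def InWhitney (E : Set Pt) (Q : DSquare) : Prop :=
  (Q.dil 3 ∩ E).Subsingleton ∧
  ∀ k' : ℕ, ∀ h : k' < Q.k, ¬ ((Q.anc k' h.le).dil 3 ∩ E).Subsingleton

/-- `Q ↔ Q'`, i.e. `1.1Q ∩ 1.1Q' ≠ ∅`. -/
def Touch (Q Q' : DSquare) : Prop := (Q.dil 1.1 ∩ Q'.dil 1.1).Nonempty

/-- `‖F‖_{L^{2,p}(Ω)}^p = ∫_Ω |∇²F|^p`. -/
def sobEnergy (p : ℝ) (Ω : Set Pt) (F : Pt → ℝ) : ℝ :=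
  ∫ x in Ω, ‖iteratedFDeriv ℝ 2 F x‖ ^ p

/-- The seminorm `‖F‖_{L^{2,p}(Ω)}`. -/
def sobNorm (p : ℝ) (Ω : Set Pt) (F : Pt → ℝ) : ℝ := sobEnergy p Ω F ^ (1 / p)

/-- Membership in the homogeneous Sobolev space `L^{2,p}(ℝ²)` (we work with `C²`
representatives with finite seminorm). -/
def MemSob (p : ℝ) (F : Pt → ℝ) : Prop :=
  ContDiff ℝ 2 F ∧ Integrable fun x => ‖iteratedFDeriv ℝ 2 F x‖ ^ p

/-- The trace seminorm `‖f‖_{L^{2,p}(E)}` of `f : E → ℝ`. -/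
def traceSobNorm (p : ℝ) (E : Set Pt) (f : E → ℝ) : ℝ :=
  sInf {c : ℝ | ∃ F : Pt → ℝ, MemSob p F ∧ (∀ y : E, F y.1 = f y) ∧ c = sobNorm p univ F}

/-- `T` is a linear extension operator `L^{2,p}(E) → L^{2,p}(ℝ²)` with norm bound `M`. -/
def IsExtOpPlane (p : ℝ) (E : Set Pt) (M : ℝ) (T : (E → ℝ) →ₗ[ℝ] (Pt → ℝ)) : Prop :=
  ∀ f : E → ℝ, (∃ F : Pt → ℝ, MemSob p F ∧ ∀ y : E, F y.1 = f y) →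
    MemSob p (T f) ∧ (∀ y : E, T f y.1 = f y) ∧
      sobNorm p univ (T f) ≤ M * traceSobNorm p E f

/-- `‖Φ‖_{L^{1,p}(V)}^p = ∑_{v ∈ V₀} |Φ(v) − Φ(π(v))|^p W_v^{2−p}`. -/
def treeEnergy (p : ℝ) (V : Finset (List ℕ)) (W : List ℕ → ℝ) (Φ : List ℕ → ℝ) : ℝ :=
  ∑ v ∈ V.erase [], |Φ v - Φ v.dropLast| ^ p * W v ^ (2 - p)

def treeNorm (p : ℝ) (V : Finset (List ℕ)) (W : List ℕ → ℝ) (Φ : List ℕ → ℝ) : ℝ :=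
  treeEnergy p V W Φ ^ (1 / p)

/-- The type of leaves of `V`. -/
def Leaves (V : Finset (List ℕ)) : Type := {v : List ℕ // IsLeaf V v}

/-- The trace seminorm `‖φ‖_{L^{1,p}(∂V)}`. -/
def treeTraceNorm (p : ℝ) (V : Finset (List ℕ)) (W : List ℕ → ℝ) (φ : Leaves V → ℝ) : ℝ :=
  sInf {c : ℝ | ∃ Φ : List ℕ → ℝ, (∀ v : Leaves V, Φ v.1 = φ v) ∧ c = treeNorm p V W Φ}

/-- `H` is a linear extension operator `L^{1,p}(∂V) → L^{1,p}(V)` with norm bound `M`. -/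
def IsExtOpTree (p : ℝ) (V : Finset (List ℕ)) (W : List ℕ → ℝ) (M : ℝ)
    (H : (Leaves V → ℝ) →ₗ[ℝ] (List ℕ → ℝ)) : Prop :=
  ∀ φ : Leaves V → ℝ,
    (∀ v : Leaves V, H φ v.1 = φ v) ∧ treeNorm p V W (H φ) ≤ M * treeTraceNorm p V W φ

/-- Longest common prefix of two strings (the lowest common ancestor). -/
def lcp : List ℕ → List ℕ → List ℕ
  | a :: as, b :: bs => if a = b then a :: lcp as bs else []
  | _, _ => []

/-- The cluster `C_v ⊆ E₂` associated to a vertex `v ∈ V`. -/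
def Cluster (N : ℕ) (V : Finset (List ℕ)) (W : List ℕ → ℝ) (v : List ℕ) : Set Pt :=
  {x | ∃ u, IsLeaf V u ∧ v <+: u ∧ x = pt (Psi N W u) (W u)}

/-- The average `(∂₂G)_S` of the vertical derivative of `G` over `S`. -/
def d2avg (S : Set Pt) (G : Pt → ℝ) : ℝ :=
  ⨍ x in S, fderiv ℝ G x (EuclideanSpace.single 1 1)

end

/-!
Take `K₁ = 3`, `κ₁ = 11` and `k₀ = 1/(200κ)`. Along a branch the weights decay by the factor
`ε ≤ 1/(8N)`, so the points of `E₂` below a vertex `v` differ by at most `(4/3)W_v`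
horizontally and `W_v` vertically, while the points below two vertices that fork at `w` are
at least `W_w/(2N)` apart horizontally. Hence `E` is `Δ`-separated, which bounds `δ_Q` from
below, and a square in a ball of radius `κK₁W_C` has side at most `2κK₁W_C`.
If `1.1Q` meets `E₂` only in the point `x_Q` of the leaf `u`, the point of `E₁` right below
`x_Q` lies outside `3Q`, so `δ_Q < 4W_u` and the ball of `u` already contains `Q`. A deepest
cover different from `u` would fork from `u` at a vertex whose weight is far larger than the
distance from `x_Q` to the centre of its ball. Finally, the ball of a non-root vertex has
radius at most `3κε` and stays away from `∂Q⁰`.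
-/

theorem List.exists_fork_of_not_prefix {α : Type*} :
    ∀ {a b : List α}, ¬ a <+: b → ¬ b <+: a →
      ∃ m, ∃ (ha : m < a.length) (hb : m < b.length), a.take m = b.take m ∧ a[m] ≠ b[m]
  | [], _, hab, _ => absurd (List.nil_prefix) hab
  | _, [], _, hba => absurd (List.nil_prefix) hba
  | x :: a, y :: b, hab, hba => by
    by_cases hxy : x = y
    · subst hxy
      obtain ⟨m, ha, hb, htake, hne⟩ := List.exists_fork_of_not_prefix
        (fun h => hab (List.cons_prefix_cons.mpr ⟨rfl, h⟩))
        (fun h => hba (List.cons_prefix_cons.mpr ⟨rfl, h⟩))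
      exact ⟨m + 1, by simpa, by simpa, by simpa, by simpa⟩
    · exact ⟨0, by simp, by simp, rfl, by simpa⟩

structure DecayingTree (N : ℕ) (V : Finset (List ℕ)) (W : List ℕ → ℝ) (ε : ℝ) : Prop where
  two_le : 2 ≤ N
  nil_mem : [] ∈ V
  mem_of_prefix {u v : List ℕ} : v ∈ V → u <+: v → u ∈ V
  digit_lt {v : List ℕ} : v ∈ V → ∀ i ∈ v, i < N
  weight_nil : W [] = 1
  weight_pos {v : List ℕ} : v ∈ V → 0 < W v
  weight_le {v : List ℕ} : v ∈ V → v ≠ [] → W v ≤ ε * W v.dropLast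
  eps_pos : 0 < ε
  eps_le : ε ≤ 1 / (8 * N)

theorem TreeHyp.decayingTree {k₀ : ℝ} {N : ℕ} {V : Finset (List ℕ)} {W : List ℕ → ℝ} {ε : ℝ}
    (h : TreeHyp k₀ N V W ε) (hk₀ : k₀ ≤ 1 / 8) : DecayingTree N V W ε := by
  obtain ⟨hN, ⟨hnil, hpre, hdig, -⟩, hε, hεk, hW1, hWpos, hWle⟩ := h
  refine ⟨hN, hnil, fun hv huv => hpre _ hv _ huv, fun hv => hdig _ hv, hW1,
    fun hv => hWpos _ hv, fun hv => hWle _ hv, hε, hεk.trans ?_⟩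
  calc k₀ / N ≤ 1 / 8 / N := by gcongr
    _ = 1 / (8 * N) := div_div _ _ _

theorem Psi_nil (N : ℕ) (W : List ℕ → ℝ) : Psi N W [] = 0 := by
  simp [Psi]

theorem Psi_append_singleton (N : ℕ) (W : List ℕ → ℝ) (u : List ℕ) (a : ℕ) :
    Psi N W (u ++ [a]) = Psi N W u + W u * a / (N - 1) := by
  simp only [Psi, List.length_append, List.length_singleton, Finset.sum_range_succ,
    List.take_left', List.getD_eq_getElem?_getD]
  congr 1
  · refine Finset.sum_congr rfl fun i hi => ?_
    have hi : i < u.length := Finset.mem_range.mp hi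
    rw [List.take_append_of_le_length hi.le, List.getElem?_append_left hi]
  · simp

theorem Psi_take_succ (N : ℕ) (W : List ℕ → ℝ) {v : List ℕ} {m : ℕ} (hm : m < v.length) :
    Psi N W (v.take (m + 1)) = Psi N W (v.take m) + W (v.take m) * v[m] / (N - 1) := by
  rw [List.take_succ_eq_append_getElem hm, Psi_append_singleton]

namespace DecayingTree

variable {N : ℕ} {V : Finset (List ℕ)} {W : List ℕ → ℝ} {ε : ℝ} (hT : DecayingTree N V W ε)
include hT

theorem eps_le_quarter : ε ≤ 1 / 4 := by
  have : (2 : ℝ) ≤ N := by exact_mod_cast hT.two_le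
  calc ε ≤ 1 / (8 * N) := hT.eps_le
    _ ≤ 1 / 4 := by gcongr; linarith

theorem one_lt_natCast : (1 : ℝ) < N := by
  have : (2 : ℝ) ≤ N := by exact_mod_cast hT.two_le
  linarith

theorem take_mem {v : List ℕ} (hv : v ∈ V) (m : ℕ) : v.take m ∈ V :=
  hT.mem_of_prefix hv (List.take_prefix m v)

theorem weight_take_succ_le {v : List ℕ} (hv : v ∈ V) {m : ℕ} (hm : m < v.length) :
    W (v.take (m + 1)) ≤ ε * W (v.take m) := by
  have h := hT.weight_le (hT.take_mem hv (m + 1))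
    (List.ne_nil_of_length_pos (by rw [List.length_take]; omega))
  rw [List.take_succ_eq_append_getElem hm] at h ⊢
  rwa [List.dropLast_concat] at h

theorem weight_take_le {v : List ℕ} (hv : v ∈ V) {m n : ℕ} (hmn : m ≤ n) (hn : n ≤ v.length) :
    W (v.take n) ≤ W (v.take m) := by
  induction n, hmn using Nat.le_induction with
  | base => exact le_rfl
  | succ n hmn ih =>
    calc W (v.take (n + 1)) ≤ ε * W (v.take n) := hT.weight_take_succ_le hv (by omega)
      _ ≤ W (v.take n) := mul_le_of_le_one_left (hT.weight_pos (hT.take_mem hv n)).le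
          (hT.eps_le_quarter.trans (by norm_num))
      _ ≤ W (v.take m) := ih (by omega)

theorem weight_le_mul_take {v : List ℕ} (hv : v ∈ V) {m : ℕ} (hm : m < v.length) :
    W v ≤ ε * W (v.take m) := by
  calc W v = W (v.take v.length) := by rw [List.take_length]
    _ ≤ W (v.take (m + 1)) := hT.weight_take_le hv hm le_rfl
    _ ≤ ε * W (v.take m) := hT.weight_take_succ_le hv hm

theorem weight_le_of_prefix {u v : List ℕ} (hv : v ∈ V) (huv : u <+: v) : W v ≤ W u := by
  calc W v = W (v.take v.length) := by rw [List.take_length]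
    _ ≤ W (v.take u.length) := hT.weight_take_le hv huv.length_le le_rfl
    _ = W u := by rw [← List.prefix_iff_eq_take.mp huv]

theorem weight_le_one {v : List ℕ} (hv : v ∈ V) : W v ≤ 1 :=
  hT.weight_nil ▸ hT.weight_le_of_prefix hv List.nil_prefix

theorem weight_le_eps {v : List ℕ} (hv : v ∈ V) (hne : v ≠ []) : W v ≤ ε := by
  simpa [hT.weight_nil] using hT.weight_le_mul_take hv (m := 0) (List.length_pos_iff.mpr hne)

theorem Psi_take_le_Psi_take_succ {v : List ℕ} (hv : v ∈ V) {m : ℕ} (hm : m < v.length) :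
    Psi N W (v.take m) ≤ Psi N W (v.take (m + 1)) ∧
      Psi N W (v.take (m + 1)) ≤ Psi N W (v.take m) + W (v.take m) := by
  have hN := hT.one_lt_natCast
  have hw := hT.weight_pos (hT.take_mem hv m)
  have hdigit : (v[m] : ℝ) ≤ N - 1 := by
    have := hT.digit_lt hv _ (List.getElem_mem hm)
    rw [le_sub_iff_add_le]
    exact_mod_cast this
  rw [Psi_take_succ N W hm]
  constructor
  · have : 0 ≤ W (v.take m) * v[m] / (N - 1) := by
      apply div_nonneg <;> [positivity; linarith]
    linarith
  · rw [add_le_add_iff_left, div_le_iff₀ (by linarith)]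
    exact mul_le_mul_of_nonneg_left hdigit hw.le

/-- The bound `4/3 = 1/(1 - 1/4)` sums the geometric decay of the weights along `v`. -/
theorem Psi_take_le_Psi {v : List ℕ} (hv : v ∈ V) {m : ℕ} (hm : m ≤ v.length) :
    Psi N W (v.take m) ≤ Psi N W v ∧ Psi N W v ≤ Psi N W (v.take m) + 4 / 3 * W (v.take m) := by
  induction h : v.length - m generalizing m with
  | zero => simpa [show m = v.length by omega] using (hT.weight_pos hv).le
  | succ k ih =>
    obtain ⟨ih₁, ih₂⟩ := ih (m := m + 1) (by omega) (by omega)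
    obtain ⟨hstep₁, hstep₂⟩ := hT.Psi_take_le_Psi_take_succ hv (m := m) (by omega)
    have hW := hT.weight_take_succ_le hv (m := m) (by omega)
    have hε := hT.eps_le_quarter
    have hw := hT.weight_pos (hT.take_mem hv m)
    constructor <;> nlinarith

theorem Psi_le_Psi_of_prefix {u v : List ℕ} (hv : v ∈ V) (huv : u <+: v) :
    Psi N W u ≤ Psi N W v ∧ Psi N W v ≤ Psi N W u + 4 / 3 * W u := by
  rw [List.prefix_iff_eq_take.mp huv]
  exact hT.Psi_take_le_Psi hv huv.length_le

theorem Psi_mem_Icc {v : List ℕ} (hv : v ∈ V) : Psi N W v ∈ Icc 0 (4 / 3) := by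
  have h := hT.Psi_le_Psi_of_prefix hv List.nil_prefix
  rw [Psi_nil, hT.weight_nil] at h
  exact ⟨h.1, by linarith [h.2]⟩

/-- Where two vertices fork, the gap between consecutive digits outweighs the whole
subtree below the smaller one, since `ε ≤ 1 / (8 N)`. -/
theorem weight_div_le_Psi_sub {a b : List ℕ} (ha : a ∈ V) (hb : b ∈ V) {m : ℕ}
    (hma : m < a.length) (hmb : m < b.length) (htake : a.take m = b.take m) (hlt : a[m] < b[m]) :
    W (a.take m) / (2 * N) ≤ Psi N W b - Psi N W a := by
  have hN := hT.one_lt_natCast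
  set w := W (a.take m)
  have hw : 0 < w := hT.weight_pos (hT.take_mem ha m)
  have hb' := (hT.Psi_take_le_Psi hb (m := m + 1) (by omega)).1
  have ha' := (hT.Psi_take_le_Psi ha (m := m + 1) (by omega)).2
  have hWa := hT.weight_take_succ_le ha hma
  rw [Psi_take_succ N W hmb, ← htake] at hb'
  rw [Psi_take_succ N W hma] at ha'
  have hgap : w / N ≤ w * b[m] / (N - 1) - w * a[m] / (N - 1) := by
    have hdigit : (a[m] : ℝ) + 1 ≤ b[m] := by exact_mod_cast hlt
    rw [← sub_div, ← mul_sub]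
    exact div_le_div₀ (by nlinarith) (by nlinarith) (by linarith) (by linarith)
  have hε : 8 * N * ε ≤ 1 := by
    have := hT.eps_le
    rwa [le_div_iff₀ (by positivity), mul_comm] at this
  have hsmall : 4 / 3 * (ε * w) ≤ w / (6 * N) := by
    rw [le_div_iff₀ (by positivity)]
    nlinarith
  have hthirds : w / (2 * N) + w / (6 * N) = 2 / 3 * (w / N) := by
    field_simp
    ring
  have : 0 ≤ w / N := by positivity
  linarith

theorem weight_div_le_abs_Psi_sub {a b : List ℕ} (ha : a ∈ V) (hb : b ∈ V) {m : ℕ}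
    (hma : m < a.length) (hmb : m < b.length) (htake : a.take m = b.take m) (hne : a[m] ≠ b[m]) :
    W (a.take m) / (2 * N) ≤ |Psi N W a - Psi N W b| := by
  rcases hne.lt_or_gt with hlt | hgt
  · rw [abs_sub_comm]
    exact (hT.weight_div_le_Psi_sub ha hb hma hmb htake hlt).trans (le_abs_self _)
  · rw [htake]
    exact (hT.weight_div_le_Psi_sub hb ha hmb hma htake.symm hgt).trans (le_abs_self _)

theorem exists_weight_le_abs_Psi_sub {u v a b : List ℕ} (hu : u ∈ V) (huv : ¬ u <+: v)
    (hvu : ¬ v <+: u) (ha : a ∈ V) (hb : b ∈ V) (hua : u <+: a) (hvb : v <+: b) :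
    ∃ w, 0 < w ∧ W u ≤ ε * w ∧ W v ≤ ε * w ∧ w / (2 * N) ≤ |Psi N W a - Psi N W b| := by
  obtain ⟨m, hmu, hmv, htake, hne⟩ := List.exists_fork_of_not_prefix huv hvu
  have take_eq {s t : List ℕ} (hst : s <+: t) (hm : m ≤ s.length) : t.take m = s.take m := by
    rw [List.prefix_iff_eq_take.mp hst, List.take_take, min_eq_left hm]
  refine ⟨W (u.take m), hT.weight_pos (hT.take_mem hu m), hT.weight_le_mul_take hu hmu, ?_, ?_⟩
  · rw [htake]
    exact hT.weight_le_mul_take (hT.mem_of_prefix hb hvb) hmv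
  · have h := hT.weight_div_le_abs_Psi_sub ha hb (hmu.trans_le hua.length_le)
      (hmv.trans_le hvb.length_le) (by rw [take_eq hua hmu.le, take_eq hvb hmv.le, htake])
      (by rwa [← hua.getElem hmu, ← hvb.getElem hmv])
    rwa [take_eq hua hmu.le] at h

theorem isLeaf_eq_of_prefix {u v : List ℕ} (hu : IsLeaf V u) (hv : v ∈ V) (huv : u <+: v) :
    u = v := by
  by_contra hne
  have hlt : u.length < v.length :=
    huv.length_le.lt_of_ne fun h => hne (huv.eq_of_length_le h.ge)
  have hchild := hT.take_mem hv (u.length + 1)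
  rw [List.take_succ_eq_append_getElem hlt, ← List.prefix_iff_eq_take.mp huv] at hchild
  exact hu.2 _ hchild

end DecayingTree

@[simp] theorem pt_apply_zero (a b : ℝ) : pt a b 0 = a := rfl

@[simp] theorem pt_apply_one (a b : ℝ) : pt a b 1 = b := rfl

theorem abs_sub_le_dist (x y : Pt) (i : Fin 2) : |x i - y i| ≤ dist x y :=
  (Real.dist_eq _ _).symm.trans_le (PiLp.dist_apply_le x y i)

theorem dist_le_abs_add_abs (x y : Pt) : dist x y ≤ |x 0 - y 0| + |x 1 - y 1| := by
  rw [EuclideanSpace.dist_eq, Fin.sum_univ_two, Real.sqrt_le_iff, Real.dist_eq, Real.dist_eq]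
  refine ⟨by positivity, ?_⟩
  nlinarith [sq_abs (x 0 - y 0), sq_abs (x 1 - y 1), abs_nonneg (x 0 - y 0),
    abs_nonneg (x 1 - y 1)]

theorem exists_isLeaf {V : Finset (List ℕ)} (hV : V.Nonempty) : ∃ v, IsLeaf V v := by
  obtain ⟨v, hv, hmax⟩ := V.exists_max_image List.length hV
  exact ⟨v, hv, fun a ha => by simpa using hmax _ ha⟩

theorem finite_leafWeights (V : Finset (List ℕ)) (W : List ℕ → ℝ) :
    {w : ℝ | ∃ v, IsLeaf V v ∧ w = W v}.Finite :=
  (V.finite_toSet.image W).subset fun _ ⟨v, hv, hw⟩ => ⟨v, hv.1, hw.symm⟩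

theorem Delta_le {V : Finset (List ℕ)} (W : List ℕ → ℝ) {u : List ℕ} (hu : IsLeaf V u) :
    Delta V W ≤ W u :=
  csInf_le (finite_leafWeights V W).bddBelow ⟨u, hu, rfl⟩

theorem E1set_separated {Δ : ℝ} (hΔ : 0 < Δ) {x z : Pt} (hx : x ∈ E1set Δ) (hz : z ∈ E1set Δ)
    (hxz : x ≠ z) : Δ ≤ dist x z := by
  obtain ⟨⟨n, hn⟩, -, hx1⟩ := hx
  obtain ⟨⟨m, hm⟩, -, hz1⟩ := hz
  have hnm : n ≠ m := by
    rintro rfl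
    apply hxz
    ext i
    fin_cases i
    exacts [hn.trans hm.symm, hx1.trans hz1.symm]
  have h1 : (1 : ℝ) ≤ |(n : ℝ) - m| := by exact_mod_cast Int.one_le_abs (sub_ne_zero.mpr hnm)
  calc Δ ≤ |(n : ℝ) - m| * Δ := le_mul_of_one_le_left hΔ.le h1
    _ = |x 0 - z 0| := by rw [hn, hm, ← sub_mul, abs_mul, abs_of_pos hΔ]
    _ ≤ dist x z := abs_sub_le_dist x z 0

theorem exists_mem_E1set_abs_sub_lt {Δ t : ℝ} (hΔ : 0 < Δ) (ht : t ∈ Ico 0 2) :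
    ∃ p ∈ E1set Δ, |p 0 - t| < Δ := by
  set n := ⌊t / Δ⌋
  have hle : n * Δ ≤ t := (le_div_iff₀ hΔ).mp (Int.floor_le _)
  have hlt : t < n * Δ + Δ := by
    have := (div_lt_iff₀ hΔ).mp (Int.lt_floor_add_one (t / Δ))
    linarith
  have hn : (0 : ℝ) ≤ n := by exact_mod_cast Int.floor_nonneg.mpr (div_nonneg ht.1 hΔ.le)
  refine ⟨pt (n * Δ) 0, ⟨⟨n, rfl⟩, ⟨by simpa using mul_nonneg hn hΔ.le, ?_⟩, rfl⟩, ?_⟩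
  · simpa using hle.trans_lt ht.2
  · rw [pt_apply_zero, abs_sub_lt_iff]
    constructor <;> linarith

theorem neg_three_add_mul_bounds {i k : ℕ} (hi : i < 2 ^ k) :
    -3 ≤ -3 + i * (8 / 2 ^ k : ℝ) ∧ -3 + i * (8 / 2 ^ k : ℝ) + 8 / 2 ^ k ≤ 5 := by
  have hi' : (i : ℝ) + 1 ≤ 2 ^ k := by exact_mod_cast hi
  constructor
  · have : 0 ≤ (i : ℝ) * (8 / 2 ^ k) := by positivity
    linarith
  · have : ((i : ℝ) + 1) * (8 / 2 ^ k) ≤ 8 := by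
      rw [mul_div_assoc', div_le_iff₀ (by positivity)]
      nlinarith
    linarith

theorem isOpen_Q0box : IsOpen {x : Pt | x 0 ∈ Ioo (-3) 5 ∧ x 1 ∈ Ioo (-3) 5} :=
  (isOpen_Ioo.preimage (by fun_prop)).inter (isOpen_Ioo.preimage (by fun_prop))

namespace DSquare

variable (Q : DSquare)

theorem side_pos : 0 < Q.side := by
  unfold side
  positivity

theorem corner_mem : pt Q.x0 Q.y0 ∈ Q.set :=
  ⟨⟨le_rfl, by simpa using Q.side_pos⟩, ⟨le_rfl, by simpa using Q.side_pos⟩⟩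

theorem set_subset_Q0set : Q.set ⊆ Q0set := by
  rintro x ⟨⟨hx₁, hx₂⟩, ⟨hy₁, hy₂⟩⟩
  obtain ⟨hi₁, hi₂⟩ := neg_three_add_mul_bounds Q.hi
  obtain ⟨hj₁, hj₂⟩ := neg_three_add_mul_bounds Q.hj
  simp only [x0, y0, side] at *
  exact ⟨⟨by linarith, by linarith⟩, ⟨by linarith, by linarith⟩⟩

theorem set_subset_dil {l : ℝ} (hl : 1 ≤ l) : Q.set ⊆ Q.dil l := by
  rintro x ⟨⟨hx₁, hx₂⟩, ⟨hy₁, hy₂⟩⟩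
  have := Q.side_pos
  constructor <;> rw [abs_le] <;> constructor <;> nlinarith

theorem dil_mono {l l' : ℝ} (h : l ≤ l') : Q.dil l ⊆ Q.dil l' := by
  have := Q.side_pos
  exact fun x ⟨h₀, h₁⟩ => ⟨h₀.trans (by gcongr), h₁.trans (by gcongr)⟩

theorem dist_le_of_mem_dil {l μ : ℝ} {x z : Pt} (hx : x ∈ Q.dil l) (hz : z ∈ Q.dil μ) :
    dist x z ≤ (l + μ) * Q.side := by
  obtain ⟨hx₀, hx₁⟩ := hx
  obtain ⟨hz₀, hz₁⟩ := hz
  have h₀ := abs_sub_le (x 0) (Q.x0 + Q.side / 2) (z 0)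
  have h₁ := abs_sub_le (x 1) (Q.y0 + Q.side / 2) (z 1)
  rw [abs_sub_comm (Q.x0 + _)] at h₀
  rw [abs_sub_comm (Q.y0 + _)] at h₁
  linarith [dist_le_abs_add_abs x z]

theorem side_le_of_set_subset_closedBall {c : Pt} {r : ℝ} (h : Q.set ⊆ closedBall c r) :
    Q.side ≤ 2 * r := by
  refine le_of_forall_lt_imp_le_of_dense fun t ht => ?_
  rcases lt_or_ge t 0 with ht₀ | ht₀
  · linarith [dist_nonneg.trans (mem_closedBall.mp (h Q.corner_mem))]
  have hq : pt (Q.x0 + t) Q.y0 ∈ Q.set :=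
    ⟨⟨by simpa using ht₀, by simpa using ht⟩, ⟨le_rfl, by simpa using Q.side_pos⟩⟩
  calc t = |Q.x0 + t - Q.x0| := by rw [add_sub_cancel_left, abs_of_nonneg ht₀]
    _ ≤ dist (pt (Q.x0 + t) Q.y0) (pt Q.x0 Q.y0) := by
        simpa using abs_sub_le_dist (pt (Q.x0 + t) Q.y0) (pt Q.x0 Q.y0) 0
    _ ≤ dist (pt (Q.x0 + t) Q.y0) c + dist (pt Q.x0 Q.y0) c := dist_triangle_right _ _ _
    _ ≤ 2 * r := by linarith [mem_closedBall.mp (h hq), mem_closedBall.mp (h Q.corner_mem)]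

theorem side_lt_two_mul_dist {x p : Pt} (hx : x ∈ Q.dil 1.1) (hp : p ∉ Q.dil 3) :
    Q.side < 2 * dist x p := by
  obtain ⟨hx₀, hx₁⟩ := hx
  have := Q.side_pos
  simp only [dil, mem_ofPred_eq, not_and_or, not_le] at hp
  rcases hp with hp | hp
  · have := abs_sub_le (p 0) (x 0) (Q.x0 + Q.side / 2)
    linarith [abs_sub_comm (p 0) (x 0), abs_sub_le_dist x p 0]
  · have := abs_sub_le (p 1) (x 1) (Q.y0 + Q.side / 2)
    linarith [abs_sub_comm (p 1) (x 1), abs_sub_le_dist x p 1]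

theorem side_anc_pred (hk : 0 < Q.k) : (Q.anc (Q.k - 1) (Nat.sub_le _ _)).side = 2 * Q.side := by
  obtain ⟨k, hk'⟩ : ∃ k, Q.k = k + 1 := ⟨Q.k - 1, by omega⟩
  simp only [side, anc, hk', Nat.add_sub_cancel, pow_succ]
  field_simp

theorem dil_subset_interior_Q0set {c : Pt} {r : ℝ} (h : Q.set ⊆ closedBall c r) (hr : r ≤ 1 / 2)
    (hc : c 0 ∈ Icc 0 (4 / 3) ∧ c 1 ∈ Icc 0 1) : Q.dil 1.1 ⊆ interior Q0set := by
  intro z hz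
  have hside := Q.side_le_of_set_subset_closedBall h
  have hzq := Q.dist_le_of_mem_dil hz (Q.set_subset_dil le_rfl Q.corner_mem)
  have hqc := mem_closedBall.mp (h Q.corner_mem)
  have hzc : dist z c ≤ 13 / 5 := by linarith [dist_triangle z (pt Q.x0 Q.y0) c, Q.side_pos]
  have h₀ := (abs_le.mp ((abs_sub_le_dist z c 0).trans hzc))
  have h₁ := (abs_le.mp ((abs_sub_le_dist z c 1).trans hzc))
  refine interior_maximal ?_ isOpen_Q0box ⟨⟨?_, ?_⟩, ⟨?_, ?_⟩⟩
  · exact fun x hx => ⟨Ioo_subset_Ico_self hx.1, Ioo_subset_Ico_self hx.2⟩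
  all_goals linarith [hc.1.1, hc.1.2, hc.2.1, hc.2.2]

end DSquare

theorem InWhitney.div_le_side {E : Set Pt} {Q : DSquare} {δ : ℝ} (hQ : InWhitney E Q)
    (hE : ∀ x ∈ E, ∀ z ∈ E, x ≠ z → δ ≤ dist x z) (hδ : δ ≤ 160) : δ / 20 ≤ Q.side := by
  rcases Nat.eq_zero_or_pos Q.k with hk | hk
  · simp only [DSquare.side, hk, pow_zero]
    linarith
  obtain ⟨x, ⟨hx, hxE⟩, z, ⟨hz, hzE⟩, hxz⟩ :=
    Set.not_subsingleton_iff.mp (hQ.2 (Q.k - 1) (by omega))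
  have := (Q.anc _ _).dist_le_of_mem_dil hx hz
  rw [Q.side_anc_pred hk] at this
  linarith [hE x hxE z hzE hxz, Q.side_pos]

/-- With `r w = κ K₁ W_w` and `S = Q`, `v` is the vertex of the paper's cluster `C_Q`. -/
def IsDeepestCover (V : Finset (List ℕ)) (y : List ℕ → Pt) (r : List ℕ → ℝ) (S : Set Pt)
    (v : List ℕ) : Prop :=
  v ∈ V ∧ S ⊆ closedBall (y v) (r v) ∧
    ∀ w ∈ V, S ⊆ closedBall (y w) (r w) → w.length ≤ v.length

theorem exists_isDeepestCover {V : Finset (List ℕ)} {y : List ℕ → Pt} {r : List ℕ → ℝ}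
    {S : Set Pt} (hnil : [] ∈ V) (hS : S ⊆ closedBall (y []) (r [])) :
    ∃ v, IsDeepestCover V y r S v := by
  obtain ⟨v, hv, hmax⟩ := (V.filter fun v => S ⊆ closedBall (y v) (r v)).exists_max_image
    List.length ⟨[], Finset.mem_filter.mpr ⟨hnil, hS⟩⟩
  rw [Finset.mem_filter] at hv
  exact ⟨v, hv.1, hv.2, fun w hw hSw => hmax w (Finset.mem_filter.mpr ⟨hw, hSw⟩)⟩

namespace DecayingTree

variable {N : ℕ} {V : Finset (List ℕ)} {W : List ℕ → ℝ} {ε : ℝ} (hT : DecayingTree N V W ε)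
include hT

theorem Delta_pos : 0 < Delta V W := by
  obtain ⟨u, hu⟩ := exists_isLeaf ⟨[], hT.nil_mem⟩
  have hne : {w : ℝ | ∃ v, IsLeaf V v ∧ w = W v}.Nonempty := ⟨W u, u, hu, rfl⟩
  obtain ⟨v, hv, hΔ⟩ := hne.csInf_mem (finite_leafWeights V W)
  rw [Delta, hΔ]
  exact hT.weight_pos hv.1

theorem cluster_of_isLeaf {u : List ℕ} (hu : IsLeaf V u) :
    Cluster N V W u = {pt (Psi N W u) (W u)} := by
  ext x
  constructor
  · rintro ⟨u', hu', huu', rfl⟩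
    rw [hT.isLeaf_eq_of_prefix hu hu'.1 huu']
    rfl
  · rintro rfl
    exact ⟨u, hu, List.prefix_refl u, rfl⟩

theorem mem_Icc_of_mem_cluster {v : List ℕ} {x : Pt} (hx : x ∈ Cluster N V W v) :
    x 0 ∈ Icc 0 (4 / 3) ∧ x 1 ∈ Icc 0 1 := by
  obtain ⟨a, ha, -, rfl⟩ := hx
  exact ⟨hT.Psi_mem_Icc ha.1, (hT.weight_pos ha.1).le, hT.weight_le_one ha.1⟩

theorem cluster_subset_closedBall {v : List ℕ} {y : Pt}
    (hy : y ∈ Cluster N V W v) : Cluster N V W v ⊆ closedBall y (3 * W v) := by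
  obtain ⟨b, hb, hvb, rfl⟩ := hy
  rintro _ ⟨a, ha, hva, rfl⟩
  have hPa := hT.Psi_le_Psi_of_prefix ha.1 hva
  have hPb := hT.Psi_le_Psi_of_prefix hb.1 hvb
  have hWa := hT.weight_le_of_prefix ha.1 hva
  have hWb := hT.weight_le_of_prefix hb.1 hvb
  have := hT.weight_pos ha.1
  have := hT.weight_pos hb.1
  have h0 : |Psi N W a - Psi N W b| ≤ 4 / 3 * W v := abs_sub_le_iff.mpr ⟨by linarith, by linarith⟩
  have h1 : |W a - W b| ≤ W v := abs_sub_le_iff.mpr ⟨by linarith, by linarith⟩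
  have := dist_le_abs_add_abs (pt (Psi N W a) (W a)) (pt (Psi N W b) (W b))
  simp only [pt_apply_zero, pt_apply_one] at this
  rw [mem_closedBall]
  linarith

theorem Delta_le_one : Delta V W ≤ 1 := by
  obtain ⟨u, hu⟩ := exists_isLeaf ⟨[], hT.nil_mem⟩
  exact (Delta_le W hu).trans (hT.weight_le_one hu.1)

theorem Eset_separated {x z : Pt} (hx : x ∈ Eset N V W) (hz : z ∈ Eset N V W) (hxz : x ≠ z) :
    Delta V W ≤ dist x z := by
  have h12 : ∀ x ∈ E1set (Delta V W), ∀ z ∈ E2set N V W, Delta V W ≤ dist x z := by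
    rintro x ⟨-, -, hx1⟩ _ ⟨b, hb, rfl⟩
    calc Delta V W ≤ |x 1 - W b| := by
          rw [hx1, zero_sub, abs_neg, abs_of_pos (hT.weight_pos hb.1)]
          exact Delta_le W hb
      _ ≤ _ := by simpa using abs_sub_le_dist x (pt (Psi N W b) (W b)) 1
  rcases hx with hx | ⟨a, ha, rfl⟩ <;> rcases hz with hz | ⟨b, hb, rfl⟩
  · exact E1set_separated hT.Delta_pos hx hz hxz
  · exact h12 x hx _ ⟨b, hb, rfl⟩
  · rw [dist_comm]
    exact h12 z hz _ ⟨a, ha, rfl⟩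
  · have hab : a ≠ b := by rintro rfl; exact hxz rfl
    obtain ⟨w, hw, hWa, -, hsep⟩ := hT.exists_weight_le_abs_Psi_sub ha.1
      (fun h => hab (hT.isLeaf_eq_of_prefix ha hb.1 h))
      (fun h => hab (hT.isLeaf_eq_of_prefix hb ha.1 h).symm) ha.1 hb.1 (List.prefix_refl a)
      (List.prefix_refl b)
    have hεw : ε * w ≤ w / (2 * N) := by
      have := hT.one_lt_natCast
      calc ε * w ≤ 1 / (8 * N) * w := by gcongr; exact hT.eps_le
        _ ≤ w / (2 * N) := by rw [div_mul_eq_mul_div, one_mul]; gcongr; linarith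
    calc Delta V W ≤ W a := Delta_le W ha
      _ ≤ |Psi N W a - Psi N W b| := by linarith
      _ ≤ _ := by simpa using abs_sub_le_dist (pt (Psi N W a) (W a)) (pt (Psi N W b) (W b)) 0

theorem Q0set_subset_closedBall {y : Pt} (hy : y ∈ Cluster N V W []) : Q0set ⊆ closedBall y 10 := by
  obtain ⟨⟨hy₀, hy₀'⟩, ⟨hy₁, hy₁'⟩⟩ := hT.mem_Icc_of_mem_cluster hy
  rintro x ⟨⟨hx₀, hx₀'⟩, ⟨hx₁, hx₁'⟩⟩
  have h₀ : |x 0 - y 0| ≤ 5 := abs_le.mpr ⟨by linarith, by linarith⟩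
  have h₁ : |x 1 - y 1| ≤ 5 := abs_le.mpr ⟨by linarith, by linarith⟩
  rw [mem_closedBall]
  linarith [dist_le_abs_add_abs x y]

theorem side_lt_of_mem_dil {Q : DSquare} (hQ : (Q.dil 3 ∩ Eset N V W).Subsingleton) {u : List ℕ}
    (hu : IsLeaf V u) (hx : pt (Psi N W u) (W u) ∈ Q.dil 1.1) : Q.side < 4 * W u := by
  have hΔ := Delta_le W hu
  have hΨ := hT.Psi_mem_Icc hu.1
  have hWu := hT.weight_pos hu.1
  obtain ⟨p, hp, hp₀⟩ := exists_mem_E1set_abs_sub_lt hT.Delta_pos (t := Psi N W u)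
    ⟨hΨ.1, by linarith [hΨ.2]⟩
  have hp₁ : p 1 = 0 := hp.2.2
  have hpx : p ≠ pt (Psi N W u) (W u) := fun h => by simp [h] at hp₁; linarith
  have hp3 : p ∉ Q.dil 3 := fun h =>
    hpx (hQ ⟨h, Or.inl hp⟩ ⟨Q.dil_mono (by norm_num) hx, Or.inr ⟨u, hu, rfl⟩⟩)
  have hdist := dist_le_abs_add_abs (pt (Psi N W u) (W u)) p
  rw [pt_apply_zero, pt_apply_one, hp₁, sub_zero, abs_of_pos hWu, abs_sub_comm] at hdist
  linarith [Q.side_lt_two_mul_dist hx hp3]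

theorem eq_of_isDeepestCover {κ : ℝ} (hκ : 3 ≤ κ) (hε : 200 * κ * N * ε ≤ 1)
    {y : List ℕ → Pt} (hy : ∀ v ∈ V, y v ∈ Cluster N V W v) {Q : DSquare}
    (hQ : (Q.dil 3 ∩ Eset N V W).Subsingleton) {v : List ℕ}
    (hv : IsDeepestCover V y (fun w => κ * 3 * W w) Q.set v) {u : List ℕ} (hu : IsLeaf V u)
    (hx : pt (Psi N W u) (W u) ∈ Q.dil 1.1) : v = u := by
  obtain ⟨hvV, hQv, hmax⟩ := hv
  set x := pt (Psi N W u) (W u)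
  have hside := hT.side_lt_of_mem_dil hQ hu hx
  have hWu := hT.weight_pos hu.1
  have hyu : y u = x := by simpa [hT.cluster_of_isLeaf hu] using hy u hu.1
  have hQx : ∀ q ∈ Q.set, dist q x ≤ 21 / 10 * Q.side := fun q hq => by
    have := Q.dist_le_of_mem_dil (Q.set_subset_dil le_rfl hq) hx
    norm_num at this ⊢
    linarith
  have hlen : u.length ≤ v.length := hmax u hu.1 fun q hq => by
    rw [mem_closedBall, hyu]
    nlinarith [hQx q hq]
  by_contra hne
  obtain ⟨b, hb, hvb, hyv⟩ := hy v hvV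
  obtain ⟨w, hw, hWuw, hWvw, hsep⟩ := hT.exists_weight_le_abs_Psi_sub hu.1
    (fun h => hne (hT.isLeaf_eq_of_prefix hu hvV h).symm) (fun h => hne (h.eq_of_length_le hlen))
    hu.1 hb.1 (List.prefix_refl u) hvb
  have hclose : |Psi N W u - Psi N W b| ≤ 21 / 10 * Q.side + κ * 3 * W v :=
    calc |Psi N W u - Psi N W b| ≤ dist x (y v) := by
          simpa [x, hyv] using abs_sub_le_dist x (y v) 0
      _ ≤ dist x (pt Q.x0 Q.y0) + dist (pt Q.x0 Q.y0) (y v) := dist_triangle _ _ _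
      _ ≤ 21 / 10 * Q.side + κ * 3 * W v := by
          rw [dist_comm]
          exact add_le_add (hQx _ Q.corner_mem) (mem_closedBall.mp (hQv Q.corner_mem))
  have hN := hT.one_lt_natCast
  have hPsi : |Psi N W u - Psi N W b| ≤ (42 / 5 + κ * 3) * ε * w := by
    nlinarith [mul_le_mul_of_nonneg_left hWvw (by linarith : (0 : ℝ) ≤ κ * 3)]
  have hsum : w ≤ 2 * N * ((42 / 5 + κ * 3) * ε * w) := by
    rw [div_le_iff₀ (by positivity)] at hsep
    nlinarith
  have hsmall : N * ε * (42 / 5 + κ * 3) ≤ 3 / 100 := by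
    nlinarith [mul_nonneg (mul_nonneg (by positivity : (0 : ℝ) ≤ N) hT.eps_pos.le)
      (by linarith : (0 : ℝ) ≤ κ * 3 - 42 / 5)]
  nlinarith

theorem cluster_eq_singleton_of_isDeepestCover {κ : ℝ} (hκ : 3 ≤ κ) (hε : 200 * κ * N * ε ≤ 1)
    {y : List ℕ → Pt} (hy : ∀ v ∈ V, y v ∈ Cluster N V W v) {Q : DSquare}
    (hQ : (Q.dil 3 ∩ Eset N V W).Subsingleton) {v : List ℕ}
    (hv : IsDeepestCover V y (fun w => κ * 3 * W w) Q.set v) {x : Pt}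
    (hx : Q.dil 1.1 ∩ E2set N V W = {x}) : Cluster N V W v = {x} := by
  obtain ⟨hxQ, u, hu, rfl⟩ : x ∈ Q.dil 1.1 ∩ E2set N V W := hx ▸ rfl
  rw [hT.eq_of_isDeepestCover hκ hε hy hQ hv hu hxQ, hT.cluster_of_isLeaf hu]

theorem eq_nil_of_isDeepestCover {κ : ℝ} (hκ : 0 ≤ κ) (hε : 200 * κ * N * ε ≤ 1)
    {y : List ℕ → Pt} (hy : ∀ v ∈ V, y v ∈ Cluster N V W v) {Q : DSquare} {v : List ℕ}
    (hv : IsDeepestCover V y (fun w => κ * 3 * W w) Q.set v)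
    (hfr : (Q.dil 1.1 ∩ frontier Q0set).Nonempty) : v = [] := by
  by_contra hne
  have hWv := hT.weight_le_eps hv.1 hne
  have hN := hT.one_lt_natCast
  have hr : κ * 3 * W v ≤ 1 / 2 := by
    nlinarith [mul_nonneg hκ hT.eps_pos.le]
  obtain ⟨z, hz, hzfr⟩ := hfr
  exact disjoint_interior_frontier.le_bot
    ⟨Q.dil_subset_interior_Q0set hv.2.1 hr (hT.mem_Icc_of_mem_cluster (hy v hv.1)) hz, hzfr⟩

end DecayingTree

/-- well-definedness of the cluster assignment `Q ↦ C_Q`, together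
with parts of Lemma 8 of the paper. -/
theorem statement15 :
    ∃ κ₁ K₁ : ℝ, 10 < κ₁ ∧ 1 < K₁ ∧
      ∀ κ : ℝ, κ₁ ≤ κ →
        ∃ k₀ : ℝ, 0 < k₀ ∧
          ∀ (N : ℕ) (V : Finset (List ℕ)) (W : List ℕ → ℝ) (ε : ℝ) (y : List ℕ → Pt),
            TreeHyp k₀ N V W ε → DepthAtLeastOne V →
            (∀ v ∈ V, y v ∈ Cluster N V W v) →
              (∀ v ∈ V, Cluster N V W v ⊆ closedBall (y v) (K₁ * W v)) ∧
              Q0set ⊆ closedBall (y []) (κ * K₁ * W []) ∧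
              ∃ cq : DSquare → List ℕ,
                ∀ Q : DSquare, InWhitney (Eset N V W) Q →
                  (cq Q ∈ V ∧
                    Q.set ⊆ closedBall (y (cq Q)) (κ * K₁ * W (cq Q)) ∧
                    ∀ v ∈ V, Q.set ⊆ closedBall (y v) (κ * K₁ * W v) →
                      v.length ≤ (cq Q).length) ∧
                  (Delta V W / 20 ≤ Q.side ∧ Q.side ≤ 2 * K₁ * κ * W (cq Q)) ∧
                  (∀ x : Pt, Q.dil 1.1 ∩ E2set N V W = {x} →
                    Cluster N V W (cq Q) = {x}) ∧
                  ((Q.dil 1.1 ∩ frontier Q0set).Nonempty → cq Q = []) := by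
  refine ⟨11, 3, by norm_num, by norm_num, fun κ hκ => ⟨1 / (200 * κ), by positivity, ?_⟩⟩
  intro N V W ε y hTH _ hy
  have hκ₀ : 0 < κ := by linarith
  have hT := hTH.decayingTree (by rw [div_le_div_iff₀ (by positivity) (by norm_num)]; linarith)
  have hε : 200 * κ * N * ε ≤ 1 := by
    obtain ⟨-, -, -, hεk, -⟩ := hTH
    rwa [div_div, le_div_iff₀ (by nlinarith [hT.one_lt_natCast]), mul_comm] at hεk
  have hQ0 : Q0set ⊆ closedBall (y []) (κ * 3 * W []) :=
    (hT.Q0set_subset_closedBall (hy [] hT.nil_mem)).trans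
      (closedBall_subset_closedBall (by rw [hT.weight_nil]; linarith))
  choose cq hcq using fun Q : DSquare =>
    exists_isDeepestCover (r := fun w => κ * 3 * W w) hT.nil_mem (Q.set_subset_Q0set.trans hQ0)
  refine ⟨fun v hv => hT.cluster_subset_closedBall (hy v hv), hQ0, cq, fun Q hQ =>
    ⟨hcq Q, ⟨hQ.div_le_side (fun x hx z hz => hT.Eset_separated hx hz)
      (hT.Delta_le_one.trans (by norm_num)), ?_⟩,
    fun x => hT.cluster_eq_singleton_of_isDeepestCover (by linarith) hε hy hQ.1 (hcq Q),
    hT.eq_nil_of_isDeepestCover hκ₀.le hε hy (hcq Q)⟩⟩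
  linarith [Q.side_le_of_set_subset_closedBall (hcq Q).2.1]
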